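/- Proposition 2: suppose each agent i ∈ {0,1,...,n} has an expected multi-utility preference given by a nonempty compact convex set U_i of nonconstant functions Z → ℝ. If Pareto Incomparability holds (for all lotteries l, l': if l and l' are incomparable for every individual i ∈ {1,...,n}, then they are incomparable for the social planner 0), then for every bi-independent combination (u_i, v_i)_{i=1}^n ∈ Π_i U_i² there exist u_0 ∈ U_0, α, α' ∈ ℝ^n_{≥0} with (α,α') ≠ (0,0), and β ∈ ℝ such that u_0 = Σ_i α_i u_i − Σ_i α'_i v_i + β·1. -/

import Mathlib

/-!
The combinations `∑ αᵢ uᵢ - ∑ α'ᵢ vᵢ + β` with `α, α' ≥ 0` form a cone which, by bi-independence,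
is the injective linear image of a closed orthant and hence closed. If `U₀` missed it, a
functional separating the compact convex set `U₀` from the cone, perturbed by a small multiple
of a functional equal to `1` on every `uᵢ`, `-1` on every `vᵢ` and `0` on constants, would be
positive on every `uᵢ`, negative on every `vᵢ` and on all of `U₀`, and zero on constants. Up to
a positive factor such a functional is `w ↦ E_l[w] - E_l'[w]` for two lotteries `l, l'`; these
are incomparable for every individual while the planner strictly prefers `l'`, contradicting
Pareto Incomparability. Finally `α = α' = 0` would make the social utility constant.
-/

open Finset

/-- Expected utility of lottery `l` with utility `u`. -/
def EU {Z : Type*} [Fintype Z] (l u : Z → ℝ) : ℝ := ∑ z, l z * u z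

/-- `l` is a lottery (probability distribution) on `Z`. -/
def IsLottery {Z : Type*} [Fintype Z] (l : Z → ℝ) : Prop :=
  (∀ z, 0 ≤ l z) ∧ ∑ z, l z = 1

/-- Expected multi-utility preference: `l ≿ l'` under the set `U`. -/
def Pref {Z : Type*} [Fintype Z] (U : Set (Z → ℝ)) (l l' : Z → ℝ) : Prop :=
  ∀ u ∈ U, EU l' u ≤ EU l u

/-- `u` is nonconstant. -/
def Nonconst {Z : Type*} (u : Z → ℝ) : Prop := ∃ z z', u z ≠ u z'

def signCone {ι : Type*} [Fintype ι] (s : ι → SignType) : ProperCone ℝ (ι → ℝ) where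
  carrier := {g | ∀ i, 0 ≤ (s i : ℝ) * g i}
  add_mem' hg hh i := by simpa [mul_add] using add_nonneg (hg i) (hh i)
  zero_mem' i := by simp
  smul_mem' c g hg i := by
    change 0 ≤ (s i : ℝ) * ((c : ℝ) * g i)
    rw [mul_left_comm]
    exact mul_nonneg c.2 (hg i)
  isClosed' := by
    simp only [Set.ofPred_forall]
    exact isClosed_iInter fun i => isClosed_le continuous_const (by fun_prop)

lemma single_mem_signCone {ι : Type*} [Fintype ι] [DecidableEq ι] {s : ι → SignType} {j : ι}
    {c : ℝ} (h : 0 ≤ (s j : ℝ) * c) : Pi.single j c ∈ signCone s := by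
  intro i
  rcases eq_or_ne i j with rfl | hij
  · simpa using h
  · simp [hij]

lemma sign_add_mul_eq_self {a ε : ℝ} {σ : SignType} (ha : ∀ c : ℝ, 0 ≤ (σ : ℝ) * c → 0 ≤ c * a)
    (hε : 0 < ε) : SignType.sign (a + ε * σ) = σ := by
  obtain rfl | rfl | rfl := σ.trichotomy
  · simpa [sign_eq_neg_one_iff] using by linarith [ha (-1) (by simp)]
  · have h1 := ha 1 (by simp)
    have h2 := ha (-1) (by simp)
    simp only [SignType.coe_zero, mul_zero, add_zero, sign_eq_zero_iff]
    linarith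
  · simpa [sign_eq_one_iff] using by linarith [ha 1 (by simp)]

theorem LinearIndependent.exists_linearMap_apply_eq {ι K V W : Type*} [DivisionRing K]
    [AddCommGroup V] [Module K V] [AddCommGroup W] [Module K W] {b : ι → V}
    (hb : LinearIndependent K b) (c : ι → W) : ∃ φ : V →ₗ[K] W, ∀ i, φ (b i) = c i := by
  obtain ⟨φ, hφ⟩ := LinearMap.exists_extend ((Finsupp.linearCombination K c).comp hb.repr)
  refine ⟨φ, fun i => ?_⟩
  have := LinearMap.congr_fun hφ ⟨b i, Submodule.subset_span (Set.mem_range_self i)⟩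
  simpa [hb.repr_eq_single i] using this

theorem IsCompact.exists_pos_forall_add_mul_lt_zero {X : Type*} [TopologicalSpace X] {K : Set X}
    (hK : IsCompact K) {f g : X → ℝ} (hf : Continuous f) (hg : Continuous g)
    (hfK : ∀ x ∈ K, f x < 0) : ∃ ε > 0, ∀ x ∈ K, f x + ε * g x < 0 := by
  have hnhds : ∀ᶠ ε in nhds (0 : ℝ), ∀ x ∈ K, f x + ε * g x < 0 :=
    hK.eventually_forall_of_forall_eventually fun x hx =>
      (by fun_prop : Continuous fun p : ℝ × X => f p.2 + p.1 * g p.2).continuousAt.eventually_lt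
        continuousAt_const (by simpa using hfK x hx)
  obtain ⟨ε, hε, hεpos⟩ :=
    ((hnhds.filter_mono nhdsWithin_le_nhds).and (self_mem_nhdsWithin (s := Set.Ioi 0))).exists
  exact ⟨ε, hεpos, hε⟩

section SignSeparation

variable {ι E : Type*} [Fintype ι] [NormedAddCommGroup E] [NormedSpace ℝ E]

lemma ProperCone.coe_map_of_injective {V : Type*} [NormedAddCommGroup V] [NormedSpace ℝ V]
    [FiniteDimensional ℝ V] (C : ProperCone ℝ V) {T : V →L[ℝ] E} (hT : Function.Injective T) :
    (C.map T : Set E) = T '' C :=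
  ((LinearMap.isClosedEmbedding_of_injective (f := (T : V →ₗ[ℝ] E))
    (LinearMap.ker_eq_bot.2 hT)).isClosedMap _ C.isClosed).closure_eq

theorem exists_sign_apply_eq_of_disjoint_image_signCone [FiniteDimensional ℝ E] {b : ι → E}
    (hb : LinearIndependent ℝ b) (s : ι → SignType) {K : Set E} (hKconv : Convex ℝ K)
    (hKcomp : IsCompact K) (hdisj : Disjoint K (Fintype.linearCombination ℝ b '' signCone s)) :
    ∃ f : StrongDual ℝ E, (∀ j, SignType.sign (f (b j)) = s j) ∧ ∀ x ∈ K, f x < 0 := by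
  classical
  set T := (Fintype.linearCombination ℝ b).toContinuousLinearMap
  have hC : ((signCone s).map T : Set E) = T '' signCone s :=
    (signCone s).coe_map_of_injective hb.fintypeLinearCombination_injective
  obtain ⟨f, hf_cone, hfK⟩ := ProperCone.hyperplane_separation _ hKconv hKcomp (hC ▸ hdisj)
  obtain ⟨φ, hφ⟩ := hb.exists_linearMap_apply_eq fun j => (s j : ℝ)
  obtain ⟨ε, hε, hεK⟩ := hKcomp.exists_pos_forall_add_mul_lt_zero f.continuous
    φ.continuous_of_finiteDimensional hfK
  refine ⟨f + ε • LinearMap.toContinuousLinearMap φ, fun j => ?_, hεK⟩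
  have hf_dual : ∀ c : ℝ, 0 ≤ (s j : ℝ) * c → 0 ≤ c * f (b j) := fun c hc => by
    simpa using hf_cone (c • b j) <| by
      rw [← SetLike.mem_coe, hC]
      exact ⟨Pi.single j c, single_mem_signCone hc, by simp [T, Fintype.linearCombination_apply]⟩
  simpa [hφ] using sign_add_mul_eq_self hf_dual hε

end SignSeparation

section Lotteries

variable {Z : Type*} [Fintype Z]

lemma exists_isLottery_sub_eq_smul [Nonempty Z] {d : Z → ℝ} (hd : ∑ z, d z = 0) :
    ∃ l l' : Z → ℝ, IsLottery l ∧ IsLottery l' ∧ ∃ τ : ℝ, 0 < τ ∧ l - l' = τ • d := by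
  set N : ℝ := (Fintype.card Z : ℝ)
  have hN : 0 < N := Nat.cast_pos.2 Fintype.card_pos
  set τ : ℝ := (N * (‖d‖ + 1))⁻¹
  have hτ : 0 < τ := by positivity
  have hunif : IsLottery fun _ : Z => N⁻¹ :=
    ⟨fun _ => by positivity, by simp [N, Finset.card_univ]⟩
  refine ⟨fun z => N⁻¹ + τ * d z, fun _ => N⁻¹, ⟨fun z => ?_, ?_⟩, hunif, τ, hτ, by ext; simp⟩
  · -- `τ |d z| ≤ τ ‖d‖ < N⁻¹`
    have hdz : -‖d‖ ≤ d z := neg_le_of_abs_le (norm_le_pi_norm d z)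
    have : τ * (‖d‖ + 1) = N⁻¹ := by
      simp only [τ]
      field_simp
    nlinarith
  · simp [Finset.sum_add_distrib, ← Finset.mul_sum, hd, hunif.2]

lemma exists_isLottery_EU_sub_eq [Nonempty Z] (g : Module.Dual ℝ (Z → ℝ)) (hg : g 1 = 0) :
    ∃ l l' : Z → ℝ, IsLottery l ∧ IsLottery l' ∧
      ∃ τ : ℝ, 0 < τ ∧ ∀ w, EU l w - EU l' w = τ * g w := by
  classical
  set d := (dotProductEquiv ℝ Z).symm g
  have hgd : ∀ w, g w = d ⬝ᵥ w := fun w => by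
    rw [← (dotProductEquiv ℝ Z).apply_symm_apply g]; rfl
  obtain ⟨l, l', hl, hl', τ, hτ, hll'⟩ :=
    exists_isLottery_sub_eq_smul (d := d) (by rw [← dotProduct_one, ← hgd, hg])
  refine ⟨l, l', hl, hl', τ, hτ, fun w => ?_⟩
  rw [hgd, ← smul_eq_mul, ← smul_dotProduct, ← hll', sub_dotProduct]
  rfl

lemma exists_isLottery_incomparable_of_dual [Nonempty Z] {ι : Type*} {U : ι → Set (Z → ℝ)}
    {U₀ : Set (Z → ℝ)} {u v : ι → Z → ℝ} (hu : ∀ i, u i ∈ U i) (hv : ∀ i, v i ∈ U i)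
    (g : Module.Dual ℝ (Z → ℝ)) (hg1 : g 1 = 0) (hgu : ∀ i, 0 < g (u i))
    (hgv : ∀ i, g (v i) < 0) (hgU₀ : ∀ w ∈ U₀, g w < 0) :
    ∃ l l' : Z → ℝ, IsLottery l ∧ IsLottery l' ∧
      (∀ i, ¬ Pref (U i) l l' ∧ ¬ Pref (U i) l' l) ∧ Pref U₀ l' l := by
  obtain ⟨l, l', hl, hl', τ, hτ, hEU⟩ := exists_isLottery_EU_sub_eq g hg1
  have hEU_lt : ∀ w, g w < 0 → EU l w < EU l' w := fun w hw =>
    sub_neg.1 ((hEU w).trans_lt (mul_neg_of_pos_of_neg hτ hw))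
  have hEU_gt : ∀ w, 0 < g w → EU l' w < EU l w := fun w hw =>
    sub_pos.1 ((mul_pos hτ hw).trans_eq (hEU w).symm)
  refine ⟨l, l', hl, hl', fun i => ⟨fun h => ?_, fun h => ?_⟩,
    fun w hw => (hEU_lt w (hgU₀ w hw)).le⟩
  · exact (h (v i) (hv i)).not_gt (hEU_lt _ (hgv i))
  · exact (h (u i) (hu i)).not_gt (hEU_gt _ (hgu i))

end Lotteries

theorem pareto_incomparability_implies_bi_utilitarian_general
    {Z : Type*} [Fintype Z] [Nonempty Z] {n : ℕ}
    (U : Fin n → Set (Z → ℝ)) (U₀ : Set (Z → ℝ))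
    (hU₀cpt : IsCompact U₀)
    (hU₀cvx : Convex ℝ U₀)
    (hU₀nc : ∀ u ∈ U₀, Nonconst u)
    (hpi : ∀ l l' : Z → ℝ, IsLottery l → IsLottery l' →
      (∀ i, ¬ Pref (U i) l l' ∧ ¬ Pref (U i) l' l) →
      (¬ Pref U₀ l l' ∧ ¬ Pref U₀ l' l)) :
    ∀ u v : Fin n → (Z → ℝ), (∀ i, u i ∈ U i) → (∀ i, v i ∈ U i) →
      LinearIndependent ℝ (fun j : Fin n ⊕ (Fin n ⊕ Unit) =>
        Sum.elim u (Sum.elim v (fun _ => (1 : Z → ℝ))) j) →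
      ∃ u₀ ∈ U₀, ∃ α α' : Fin n → ℝ, ∃ β : ℝ,
        (∀ i, 0 ≤ α i) ∧ (∀ i, 0 ≤ α' i) ∧ ¬ (α = 0 ∧ α' = 0) ∧
        u₀ = fun z => (∑ i, α i * u i z) - (∑ i, α' i * v i z) + β := by
  intro u v hu hv hli
  set b := Sum.elim u (Sum.elim v fun _ => (1 : Z → ℝ))
  -- `uᵢ` get nonnegative, `vᵢ` nonpositive and constants unconstrained coefficients
  set s : Fin n ⊕ (Fin n ⊕ Unit) → SignType := Sum.elim 1 (Sum.elim (-1) 0)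
  obtain ⟨g, hg, hgU₀⟩ : ∃ g ∈ signCone s, Fintype.linearCombination ℝ b g ∈ U₀ := by
    by_contra! hdisj
    obtain ⟨f, hfb, hfU₀⟩ := exists_sign_apply_eq_of_disjoint_image_signCone hli s hU₀cvx hU₀cpt
      (Set.disjoint_right.2 fun _ ⟨g, hg, hgw⟩ => hgw ▸ hdisj g hg)
    obtain ⟨l, l', hl, hl', hinc, hpref⟩ := exists_isLottery_incomparable_of_dual (U₀ := U₀) hu hv
      (f : (Z → ℝ) →ₗ[ℝ] ℝ) (sign_eq_zero_iff.1 (hfb (.inr (.inr ()))))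
      (fun i => sign_eq_one_iff.1 (hfb (.inl i)))
      (fun i => sign_eq_neg_one_iff.1 (hfb (.inr (.inl i)))) hfU₀
    exact (hpi l l' hl hl' hinc).2 hpref
  have hgz : ∀ z, Fintype.linearCombination ℝ b g z =
      ∑ i, g (.inl i) * u i z + ∑ i, g (.inr (.inl i)) * v i z + g (.inr (.inr ())) := by
    simp [Fintype.linearCombination_apply, Fintype.sum_sum_type, b, add_assoc]
  refine ⟨_, hgU₀, fun i => g (.inl i), fun i => -g (.inr (.inl i)), g (.inr (.inr ())),
    fun i => by simpa [s] using hg (.inl i), fun i => by simpa [s] using hg (.inr (.inl i)),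
    ?_, funext fun z => by simp [hgz]⟩
  rintro ⟨hα, hα'⟩
  obtain ⟨z, z', hzz'⟩ := hU₀nc _ hgU₀
  simp only [funext_iff, Pi.zero_apply, neg_eq_zero] at hα hα'
  exact hzz' (by simp [hgz, hα, hα'])

theorem pareto_incomparability_implies_bi_utilitarian
    {Z : Type*} [Fintype Z] [Nonempty Z] {n : ℕ} (hn : 0 < n)
    (U : Fin n → Set (Z → ℝ)) (U₀ : Set (Z → ℝ))
    (hUne : ∀ i, (U i).Nonempty) (hU₀ne : U₀.Nonempty)
    (hUcpt : ∀ i, IsCompact (U i)) (hU₀cpt : IsCompact U₀)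
    (hUcvx : ∀ i, Convex ℝ (U i)) (hU₀cvx : Convex ℝ U₀)
    (hUnc : ∀ i, ∀ u ∈ U i, Nonconst u) (hU₀nc : ∀ u ∈ U₀, Nonconst u)
    (hpi : ∀ l l' : Z → ℝ, IsLottery l → IsLottery l' →
      (∀ i, ¬ Pref (U i) l l' ∧ ¬ Pref (U i) l' l) →
      (¬ Pref U₀ l l' ∧ ¬ Pref U₀ l' l)) :
    ∀ u v : Fin n → (Z → ℝ), (∀ i, u i ∈ U i) → (∀ i, v i ∈ U i) →
      LinearIndependent ℝ (fun j : Fin n ⊕ (Fin n ⊕ Unit) =>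
        Sum.elim u (Sum.elim v (fun _ => (1 : Z → ℝ))) j) →
      ∃ u₀ ∈ U₀, ∃ α α' : Fin n → ℝ, ∃ β : ℝ,
        (∀ i, 0 ≤ α i) ∧ (∀ i, 0 ≤ α' i) ∧ ¬ (α = 0 ∧ α' = 0) ∧
        u₀ = fun z => (∑ i, α i * u i z) - (∑ i, α' i * v i z) + β :=
  pareto_incomparability_implies_bi_utilitarian_general U U₀ hU₀cpt hU₀cvx hU₀nc hpi
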